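/- arXiv:math/0310376 — 3 statements merged into one kernel-verified Lean document; each statement's English description precedes it below -/
import Mathlib

section
/- If b is a Borel-fixed monomial ideal in K[x0,...,xn] with minimal generators x0^s, x0^{s-1}x1^{λ_{s-1}}, ..., x1^{λ_0} after contracting to K[x0,x1] via a colon with a monomial in the remaining variables, then λ_i ≥ λ_{i+1} + 1 for all i; i.e., Borel-fixedness forces the monomial invariants to be strictly decreasing. -/
open MvPolynomial

/-- `I` is a monomial ideal. -/
def IsMonomialIdeal {K : Type} [Field K] {m : ℕ} (I : Ideal (MvPolynomial (Fin m) K)) : Prop :=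
  ∀ f ∈ I, ∀ p ∈ f.support, (monomial p (1 : K)) ∈ I

/-- Borel-fixedness: closed under the elementary moves sending `x_(i+1)` to `x_i`. -/
def BorelFixed {K : Type} [Field K] {n : ℕ} (I : Ideal (MvPolynomial (Fin (n + 2)) K)) : Prop :=
  ∀ p : Fin (n + 2) →₀ ℕ, monomial p (1 : K) ∈ I → ∀ i : Fin (n + 1), 0 < p i.succ →
    monomial (p + Finsupp.single i.castSucc 1 - Finsupp.single i.succ 1) (1 : K) ∈ I

/-- `x^p` is a minimal (monomial) generator of `I`. -/
def IsMinGen {K : Type} [Field K] {m : ℕ} (I : Ideal (MvPolynomial (Fin m) K))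
    (p : Fin m →₀ ℕ) : Prop :=
  monomial p (1 : K) ∈ I ∧ ∀ q : Fin m →₀ ℕ, q ≤ p → q ≠ p → monomial q (1 : K) ∉ I

/-- The ideal `(b : x^q) ∩ K[x0,x1]`, obtained by contracting the colon ideal along the
inclusion `K[x0,x1] → K[x0,...,x(n+1)]`. -/
noncomputable def contract2 {K : Type} [Field K] {n : ℕ}
    (b : Ideal (MvPolynomial (Fin (n + 2)) K)) (q : Fin (n + 2) →₀ ℕ) :
    Ideal (MvPolynomial (Fin 2) K) :=
  Ideal.comap (rename (Fin.castLE (by omega) : Fin 2 → Fin (n + 2)))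
    (Submodule.colon b (Ideal.span {monomial q (1 : K)}))

/-- If the minimal generators of `(b : x^q) ∩ K[x0,x1]` are
`x0^s, x0^(s-1) x1^(λ_(s-1)), ..., x1^(λ_0)`, then `λ_i ≥ λ_(i+1) + 1` for all `i`:
Borel-fixedness forces the monomial invariants to be strictly decreasing. -/
theorem stmt1 {K : Type} [Field K] {n : ℕ} (b : Ideal (MvPolynomial (Fin (n + 2)) K))
    (hmon : IsMonomialIdeal b) (hB : BorelFixed b)
    (q : Fin (n + 2) →₀ ℕ) (hq0 : q 0 = 0) (hq1 : q 1 = 0)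
    (s : ℕ) (lam : ℕ → ℕ)
    (hs : IsMinGen (contract2 b q) (Finsupp.single 0 s))
    (hgen : ∀ i < s, IsMinGen (contract2 b q) (Finsupp.single 0 i + Finsupp.single 1 (lam i))) :
    ∀ i, i + 1 < s → lam (i + 1) + 1 ≤ lam i := by
  intro i hi
  by_contra h
  push_neg at h
  have h1 := hgen i (by omega)
  have h2 := hgen (i + 1) hi
  refine h2.2 (Finsupp.single 0 i + Finsupp.single 1 (lam i)) ?_ ?_ h1.1
  · rw [Finsupp.le_def]
    intro j
    fin_cases j <;> simp [Finsupp.single_apply] <;> omega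
  · intro heq
    have := DFunLike.congr_fun heq (0 : Fin 2)
    simp [Finsupp.single_apply] at this
end

section
/- For a Borel-fixed monomial ideal b in K[x0,...,xn] and any monomial m in the variables x2,...,xn, the colon ideal (b : m) is again a Borel-fixed monomial ideal. -/
open MvPolynomial

lemma mem_colon_single {K : Type} [Field K] {m : ℕ} {b : Ideal (MvPolynomial (Fin m) K)}
    {g f : MvPolynomial (Fin m) K} :
    f ∈ Submodule.colon b (Ideal.span {g}) ↔ f * g ∈ b := by
  rw [Submodule.mem_colon]
  constructor
  · intro h
    have := h g (Ideal.mem_span_singleton_self g)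
    simpa [smul_eq_mul, mul_comm] using this
  · intro h p hp
    obtain ⟨c, rfl⟩ := Ideal.mem_span_singleton.mp hp
    rw [smul_eq_mul, show f * (g * c) = c * (f * g) by ring]
    exact Ideal.mul_mem_left _ _ h

/-- For a Borel-fixed monomial ideal `b` in `K[x0,...,xn]` and a monomial `x^q` in the
variables `x2,...,xn`, the colon ideal `(b : x^q)` is again a Borel-fixed monomial ideal. -/
theorem stmt2 {K : Type} [Field K] {n : ℕ} (b : Ideal (MvPolynomial (Fin (n + 2)) K))
    (hmon : IsMonomialIdeal b) (hB : BorelFixed b)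
    (q : Fin (n + 2) →₀ ℕ) (hq0 : q 0 = 0) (hq1 : q 1 = 0) :
    IsMonomialIdeal (Submodule.colon b (Ideal.span {monomial q (1 : K)})) ∧
    BorelFixed (Submodule.colon b (Ideal.span {monomial q (1 : K)})) := by
  constructor
  · intro f hf p hp
    rw [mem_colon_single] at hf ⊢
    have hsup : p + q ∈ (f * monomial q (1 : K)).support := by
      rw [mem_support_iff, coeff_mul_monomial, mul_one]
      exact mem_support_iff.mp hp
    have := hmon _ hf _ hsup
    rwa [monomial_mul, one_mul]
  · intro p hp i hpi
    rw [mem_colon_single, monomial_mul, one_mul] at hp ⊢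
    have hpq : 0 < (p + q) i.succ := by
      simp only [Finsupp.add_apply]; omega
    have := hB _ hp i hpq
    have hexp : p + Finsupp.single i.castSucc 1 - Finsupp.single i.succ 1 + q
        = p + q + Finsupp.single i.castSucc 1 - Finsupp.single i.succ 1 := by
      have hne : (i.castSucc : Fin (n + 2)) ≠ i.succ := (Fin.castSucc_lt_succ : i.castSucc < i.succ).ne
      ext j
      simp only [Finsupp.add_apply, Finsupp.tsub_apply, Finsupp.single_apply]
      by_cases h2 : i.succ = j
      · subst h2
        rw [if_neg hne, if_pos rfl]
        omega
      · rw [if_neg h2]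
        split_ifs <;> omega
    rwa [hexp]
end

section
/- Let J be a nonzero homogeneous ideal in K[x0,x1]. The greatest common divisor F of all nonzero homogeneous elements of J is homogeneous, and deg F equals the eventual (constant) value of the Hilbert function of K[x0,x1]/J. -/
open MvPolynomial

attribute [local instance] MvPolynomial.gradedAlgebra

/-- The Hilbert function of `K[x0,x1]/J` in degree `t`. -/
noncomputable def hilbQuot {K : Type} [Field K] (J : Ideal (MvPolynomial (Fin 2) K)) (t : ℕ) : ℕ :=
  Module.finrank K
    ↥((homogeneousSubmodule (Fin 2) K t).map (Ideal.Quotient.mkₐ K J).toLinearMap)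

set_option linter.unusedSectionVars false
set_option linter.unnecessarySeqFocus false
set_option maxHeartbeats 1000000
set_option synthInstance.maxHeartbeats 400000

namespace Stmt9Aux

lemma fin2_cases {i j k : Fin 2} (hij : i ≠ j) : k = i ∨ k = j := by
  have hi := i.isLt; have hj := j.isLt; have hk := k.isLt
  have hne : i.val ≠ j.val := fun h => hij (Fin.ext h)
  have : k.val = i.val ∨ k.val = j.val := by omega
  rcases this with h' | h'
  · exact Or.inl (Fin.ext h')
  · exact Or.inr (Fin.ext h')

lemma degree_add (u v : Fin 2 →₀ ℕ) :
    Finsupp.degree (u + v) = Finsupp.degree u + Finsupp.degree v := by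
  simp [Finsupp.degree_eq_weight_one, map_add]

lemma degree_fin2 (d : Fin 2 →₀ ℕ) : Finsupp.degree d = d 0 + d 1 := by
  have h : Finsupp.degree d = ∑ i : Fin 2, d i := by
    rw [Finsupp.degree]
    apply Finset.sum_subset (Finset.subset_univ _)
    intro i _ hi
    exact Finsupp.notMem_support_iff.mp hi
  rw [h, Fin.sum_univ_two]

section Domain

variable {R : Type*} [CommRing R] [IsDomain R]

lemma comp_mul_top {f g : MvPolynomial (Fin 2) R} {a b : ℕ}
    (hf : ∀ d ∈ f.support, Finsupp.degree d ≤ a) (hg : ∀ d ∈ g.support, Finsupp.degree d ≤ b) :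
    homogeneousComponent (a + b) (f * g)
      = homogeneousComponent a f * homogeneousComponent b g := by
  ext m
  rw [coeff_homogeneousComponent]
  split_ifs with hm
  · rw [coeff_mul, coeff_mul]
    apply Finset.sum_congr rfl
    rintro ⟨u, v⟩ huv
    rw [Finset.HasAntidiagonal.mem_antidiagonal] at huv
    dsimp only
    rw [coeff_homogeneousComponent, coeff_homogeneousComponent]
    by_cases hu : coeff u f = 0
    · simp [hu]
    by_cases hv : coeff v g = 0
    · simp [hv]
    have h1 : Finsupp.degree u ≤ a := hf u (by simpa [MvPolynomial.mem_support_iff] using hu)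
    have h2 : Finsupp.degree v ≤ b := hg v (by simpa [MvPolynomial.mem_support_iff] using hv)
    have h3 : Finsupp.degree u + Finsupp.degree v = a + b := by
      rw [← degree_add, huv, hm]
    rw [if_pos (by omega), if_pos (by omega)]
  · have : ((homogeneousComponent a f) * (homogeneousComponent b g)).IsHomogeneous (a + b) :=
      (homogeneousComponent_isHomogeneous a f).mul (homogeneousComponent_isHomogeneous b g)
    exact (this.coeff_eq_zero hm).symm

lemma comp_mul_bot {f g : MvPolynomial (Fin 2) R} {a b : ℕ}
    (hf : ∀ d ∈ f.support, a ≤ Finsupp.degree d) (hg : ∀ d ∈ g.support, b ≤ Finsupp.degree d) :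
    homogeneousComponent (a + b) (f * g)
      = homogeneousComponent a f * homogeneousComponent b g := by
  ext m
  rw [coeff_homogeneousComponent]
  split_ifs with hm
  · rw [coeff_mul, coeff_mul]
    apply Finset.sum_congr rfl
    rintro ⟨u, v⟩ huv
    rw [Finset.HasAntidiagonal.mem_antidiagonal] at huv
    dsimp only
    rw [coeff_homogeneousComponent, coeff_homogeneousComponent]
    by_cases hu : coeff u f = 0
    · simp [hu]
    by_cases hv : coeff v g = 0
    · simp [hv]
    have h1 : a ≤ Finsupp.degree u := hf u (by simpa [MvPolynomial.mem_support_iff] using hu)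
    have h2 : b ≤ Finsupp.degree v := hg v (by simpa [MvPolynomial.mem_support_iff] using hv)
    have h3 : Finsupp.degree u + Finsupp.degree v = a + b := by
      rw [← degree_add, huv, hm]
    rw [if_pos (by omega), if_pos (by omega)]
  · have : ((homogeneousComponent a f) * (homogeneousComponent b g)).IsHomogeneous (a + b) :=
      (homogeneousComponent_isHomogeneous a f).mul (homogeneousComponent_isHomogeneous b g)
    exact (this.coeff_eq_zero hm).symm

lemma comp_ne_zero_sup {f : MvPolynomial (Fin 2) R} (hne : f.support.Nonempty) :
    homogeneousComponent (f.support.sup' hne Finsupp.degree) f ≠ 0 := by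
  obtain ⟨d, hd, hdeq⟩ := Finset.exists_mem_eq_sup' hne Finsupp.degree
  intro h
  have := coeff_homogeneousComponent (f.support.sup' hne Finsupp.degree) f d
  rw [h, if_pos hdeq.symm] at this
  exact (MvPolynomial.mem_support_iff.mp hd) (by simpa using this.symm)

lemma comp_ne_zero_inf {f : MvPolynomial (Fin 2) R} (hne : f.support.Nonempty) :
    homogeneousComponent (f.support.inf' hne Finsupp.degree) f ≠ 0 := by
  obtain ⟨d, hd, hdeq⟩ := Finset.exists_mem_eq_inf' hne Finsupp.degree
  intro h
  have := coeff_homogeneousComponent (f.support.inf' hne Finsupp.degree) f d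
  rw [h, if_pos hdeq.symm] at this
  exact (MvPolynomial.mem_support_iff.mp hd) (by simpa using this.symm)

/-- A divisor of a nonzero homogeneous polynomial is homogeneous. -/
lemma isHomogeneous_of_mul {f g : MvPolynomial (Fin 2) R} {n : ℕ}
    (h : (f * g).IsHomogeneous n) (h0 : f * g ≠ 0) : ∃ a, f.IsHomogeneous a := by
  have hf : f ≠ 0 := left_ne_zero_of_mul h0
  have hg : g ≠ 0 := right_ne_zero_of_mul h0
  have hfs : f.support.Nonempty := MvPolynomial.support_nonempty.mpr hf
  have hgs : g.support.Nonempty := MvPolynomial.support_nonempty.mpr hg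
  set A := f.support.sup' hfs Finsupp.degree with hA
  set A' := f.support.inf' hfs Finsupp.degree with hA'
  set B := g.support.sup' hgs Finsupp.degree with hB
  set B' := g.support.inf' hgs Finsupp.degree with hB'
  have hcompmem : (f * g) ∈ homogeneousSubmodule (Fin 2) R n := h
  have htop : homogeneousComponent (A + B) (f * g) ≠ 0 := by
    rw [comp_mul_top (fun d hd => Finset.le_sup' _ hd) (fun d hd => Finset.le_sup' _ hd)]
    exact mul_ne_zero (comp_ne_zero_sup hfs) (comp_ne_zero_sup hgs)
  have hbot : homogeneousComponent (A' + B') (f * g) ≠ 0 := by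
    rw [comp_mul_bot (fun d hd => Finset.inf'_le _ hd) (fun d hd => Finset.inf'_le _ hd)]
    exact mul_ne_zero (comp_ne_zero_inf hfs) (comp_ne_zero_inf hgs)
  have h1 : A + B = n := by
    by_contra hne
    rw [homogeneousComponent_of_mem hcompmem, if_neg hne] at htop
    exact htop rfl
  have h2 : A' + B' = n := by
    by_contra hne
    rw [homogeneousComponent_of_mem hcompmem, if_neg hne] at hbot
    exact hbot rfl
  have hAA : A' ≤ A := by
    obtain ⟨d, hd⟩ := hfs
    exact le_trans (Finset.inf'_le _ hd) (Finset.le_sup' _ hd)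
  have hBB : B' ≤ B := by
    obtain ⟨d, hd⟩ := hgs
    exact le_trans (Finset.inf'_le _ hd) (Finset.le_sup' _ hd)
  have hAeq : A = A' := by omega
  refine ⟨A, fun d hd => ?_⟩
  have hd' : d ∈ f.support := MvPolynomial.mem_support_iff.mpr hd
  have hle : Finsupp.degree d ≤ A := Finset.le_sup' _ hd'
  have hge : A' ≤ Finsupp.degree d := Finset.inf'_le _ hd'
  have : Finsupp.degree d = A := by omega
  rw [← this, Finsupp.degree_eq_weight_one]; rfl

end Domain

variable {K : Type} [Field K]

lemma aeval_sub_self_mem (s : Fin 2 → MvPolynomial (Fin 2) K)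
    (P : Ideal (MvPolynomial (Fin 2) K)) (hs : ∀ k, s k - X k ∈ P)
    (f : MvPolynomial (Fin 2) K) : aeval s f - f ∈ P := by
  induction f using MvPolynomial.induction_on with
  | C r => simp
  | add p q hp hq =>
      have := P.add_mem hp hq
      convert this using 1
      rw [map_add]; ring
  | mul_X p i hp =>
      have := P.add_mem (P.mul_mem_left (aeval s p) (hs i)) (P.mul_mem_right (X i) hp)
      convert this using 1
      rw [map_mul, aeval_X]; ring

lemma eval_smul_homog {g : MvPolynomial (Fin 2) K} {n : ℕ} (hg : g.IsHomogeneous n)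
    (r : K) (x : Fin 2 → K) : eval (r • x) g = r ^ n * eval x g := by
  rw [eval_eq, eval_eq, Finset.mul_sum]
  apply Finset.sum_congr rfl
  intro d hd
  have hdeg : ∑ i ∈ d.support, d i = n := by
    have h1 : Finsupp.degree d = n := by
      rw [Finsupp.degree_eq_weight_one]
      exact hg (mem_support_iff.mp hd)
    simpa [Finsupp.degree_apply] using h1
  have : ∏ i ∈ d.support, (r • x) i ^ d i
      = r ^ n * ∏ i ∈ d.support, x i ^ d i := by
    rw [← hdeg, ← Finset.prod_pow_eq_pow_sum]
    rw [← Finset.prod_mul_distrib]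
    apply Finset.prod_congr rfl
    intro i _
    simp [mul_pow]
  rw [this]; ring

lemma aeval_line (y : Fin 2 → K) (j : Fin 2) {g : MvPolynomial (Fin 2) K} {n : ℕ}
    (hg : g.IsHomogeneous n) :
    aeval (fun k => C (y k) * X j) g = C (eval y g) * X j ^ n := by
  rw [aeval_def, eval₂_eq, eval_eq, map_sum, Finset.sum_mul]
  apply Finset.sum_congr rfl
  intro d hd
  have hdeg : ∑ i ∈ d.support, d i = n := by
    have h1 : Finsupp.degree d = n := by
      rw [Finsupp.degree_eq_weight_one]
      exact hg (mem_support_iff.mp hd)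
    simpa [Finsupp.degree_apply] using h1
  have h2 : ∏ i ∈ d.support, (C (y i) * X j) ^ d i
      = C (∏ i ∈ d.support, y i ^ d i) * X j ^ n := by
    rw [← hdeg, ← Finset.prod_pow_eq_pow_sum, map_prod, ← Finset.prod_mul_distrib]
    apply Finset.prod_congr rfl
    intro i _
    rw [mul_pow, map_pow]
  rw [h2, map_mul, MvPolynomial.algebraMap_eq]
  ring

lemma linear_dvd_of_eval_zero {x : Fin 2 → K} {i j : Fin 2} (hij : i ≠ j) (hxj : x j ≠ 0)
    {g : MvPolynomial (Fin 2) K} {n : ℕ} (hg : g.IsHomogeneous n) (hev : eval x g = 0) :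
    (X i - C (x i / x j) * X j) ∣ g := by
  set c := x i / x j with hc
  set y : Fin 2 → K := fun k => if k = i then c else 1 with hy
  set s : Fin 2 → MvPolynomial (Fin 2) K := fun k => C (y k) * X j with hs
  have hyx : y = (x j)⁻¹ • x := by
    funext k
    rcases fin2_cases (k := k) hij with rfl | rfl
    · simp [hy, hc, Pi.smul_apply, smul_eq_mul, div_eq_inv_mul]
    · simp [hy, hij.symm, Pi.smul_apply, smul_eq_mul, inv_mul_cancel₀ hxj]
  have hevy : eval y g = 0 := by
    rw [hyx, eval_smul_homog hg, hev, mul_zero]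
  have haev : aeval s g = 0 := by
    rw [hs, aeval_line y j hg, hevy, map_zero, zero_mul]
  have hmem : ∀ k, s k - X k ∈ Ideal.span {X i - C c * X j} := by
    intro k
    rcases fin2_cases (k := k) hij with rfl | rfl
    · have : s k - X k = -(X k - C c * X j) := by
        simp only [hs, hy, eq_self_iff_true, if_true]
        ring
      rw [this]
      exact neg_mem (Ideal.subset_span rfl)
    · have : s k - X k = 0 := by simp [hs, hy, hij.symm]
      rw [this]; exact zero_mem _
  have := aeval_sub_self_mem s _ hmem g
  rw [haev, zero_sub] at this
  have hg' : g ∈ Ideal.span {X i - C c * X j} := neg_mem_iff.mp this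
  exact (Ideal.mem_span_singleton.mp hg')

/-- The set of exponents of degree `t` in two variables. -/
noncomputable def degEquiv (t : ℕ) : {d : Fin 2 →₀ ℕ // Finsupp.degree d = t} ≃ Fin (t + 1) where
  toFun d := ⟨d.1 0, by
    have h1 := Finsupp.le_degree 0 d.1
    have h2 := d.2
    omega⟩
  invFun i := ⟨Finsupp.single 0 i.1 + Finsupp.single 1 (t - i.1), by
    have hi := i.isLt
    rw [degree_fin2]
    simp [Finsupp.single_apply]
    omega⟩
  left_inv d := by
    ext k
    have hd : d.1 0 + d.1 1 = t := by rw [← degree_fin2]; exact d.2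
    rcases fin2_cases (k := k) (i := (0 : Fin 2)) (j := 1) (by decide) with rfl | rfl <;>
      simp [Finsupp.single_apply] <;> omega
  right_inv i := by
    apply Fin.ext
    simp [Finsupp.single_apply]

lemma homogeneousSubmodule_eq_restrictSupport (t : ℕ) :
    homogeneousSubmodule (Fin 2) K t
      = restrictSupport K {d | Finsupp.degree d = t} :=
  homogeneousSubmodule_eq_finsupp_supported (Fin 2) K t

noncomputable def homogBasis (t : ℕ) :
    Module.Basis {d : Fin 2 →₀ ℕ // Finsupp.degree d = t} K (homogeneousSubmodule (Fin 2) K t) :=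
  (basisRestrictSupport K _).map
    (LinearEquiv.ofEq _ _ (homogeneousSubmodule_eq_restrictSupport t).symm)

instance homogFinite (t : ℕ) : Module.Finite K (homogeneousSubmodule (Fin 2) K t) := by
  haveI : Fintype {d : Fin 2 →₀ ℕ // Finsupp.degree d = t} := Fintype.ofEquiv _ (degEquiv t).symm
  exact Module.Finite.of_basis (homogBasis t)

lemma finrank_homog (t : ℕ) :
    Module.finrank K (homogeneousSubmodule (Fin 2) K t) = t + 1 := by
  haveI : Fintype {d : Fin 2 →₀ ℕ // Finsupp.degree d = t} := Fintype.ofEquiv _ (degEquiv t).symm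
  rw [Module.finrank_eq_card_basis (homogBasis t)]
  rw [Fintype.card_congr (degEquiv t), Fintype.card_fin]

lemma not_unit_of_homog_one {ℓ : MvPolynomial (Fin 2) K} (h : ℓ.IsHomogeneous 1) (h0 : ℓ ≠ 0) :
    ¬ IsUnit ℓ := by
  intro hu
  obtain ⟨v, hv⟩ := isUnit_iff_dvd_one.mp hu
  have h1 : (ℓ * v).IsHomogeneous 0 := by rw [← hv]; exact isHomogeneous_one _ _
  have h10 : ℓ * v ≠ 0 := by rw [← hv]; exact one_ne_zero
  obtain ⟨e, he⟩ := isHomogeneous_of_mul (f := v) (g := ℓ) (by rwa [mul_comm]) (by rwa [mul_comm])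
  have := (h.mul he).inj_right h1 h10
  omega

lemma decompose_eq_homogComponent (f : MvPolynomial (Fin 2) K) (n : ℕ) :
    (DirectSum.decompose (homogeneousSubmodule (Fin 2) K) f n : MvPolynomial (Fin 2) K)
      = homogeneousComponent n f :=
  MvPolynomial.decomposition.decompose'_apply f n

lemma exists_homog_mem {J : Ideal (MvPolynomial (Fin 2) K)} (hne : J ≠ ⊥)
    (hhom : Ideal.IsHomogeneous (homogeneousSubmodule (Fin 2) K) J) :
    ∃ f ∈ J, f ≠ 0 ∧ ∃ e, f.IsHomogeneous e := by
  obtain ⟨f, hfJ, hf0⟩ := Submodule.exists_mem_ne_zero_of_ne_bot hne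
  have : ∃ n, homogeneousComponent n f ≠ 0 := by
    by_contra h
    push_neg at h
    apply hf0
    rw [← MvPolynomial.sum_homogeneousComponent f]
    exact Finset.sum_eq_zero fun n _ => h n
  obtain ⟨n, hn⟩ := this
  refine ⟨homogeneousComponent n f, ?_, hn, ⟨n, homogeneousComponent_isHomogeneous n f⟩⟩
  have := hhom n hfJ
  rwa [decompose_eq_homogComponent] at this

lemma homog_mem_of_pow_mem {I : Ideal (MvPolynomial (Fin 2) K)} {N : ℕ}
    (h0 : (X 0 : MvPolynomial (Fin 2) K) ^ N ∈ I) (h1 : (X 1 : MvPolynomial (Fin 2) K) ^ N ∈ I)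
    {g : MvPolynomial (Fin 2) K} {m : ℕ}
    (hg : g.IsHomogeneous m) (hm : 2 * N ≤ m) : g ∈ I := by
  rw [g.as_sum]
  apply Ideal.sum_mem
  intro d hd
  have hdeg : d 0 + d 1 = m := by
    rw [← degree_fin2, Finsupp.degree_eq_weight_one]
    exact hg (mem_support_iff.mp hd)
  have hcase : N ≤ d 0 ∨ N ≤ d 1 := by omega
  rcases hcase with h | h
  · have key : monomial d (coeff d g)
        = X 0 ^ N * monomial (d - Finsupp.single 0 N) (coeff d g) := by
      have hsum : Finsupp.single (0 : Fin 2) N + (d - Finsupp.single 0 N) = d := by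
        ext k
        rcases fin2_cases (k := k) (i := (0 : Fin 2)) (j := 1) (by decide) with rfl | rfl <;>
          simp [Finsupp.single_apply, Finsupp.tsub_apply] <;> omega
      rw [X_pow_eq_monomial, monomial_mul, one_mul, hsum]
    rw [key]
    exact Ideal.mul_mem_right _ _ h0
  · have key : monomial d (coeff d g)
        = X 1 ^ N * monomial (d - Finsupp.single 1 N) (coeff d g) := by
      have hsum : Finsupp.single (1 : Fin 2) N + (d - Finsupp.single 1 N) = d := by
        ext k
        rcases fin2_cases (k := k) (i := (0 : Fin 2)) (j := 1) (by decide) with rfl | rfl <;>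
          simp [Finsupp.single_apply, Finsupp.tsub_apply] <;> omega
      rw [X_pow_eq_monomial, monomial_mul, one_mul, hsum]
    rw [key]
    exact Ideal.mul_mem_right _ _ h1

lemma hilb_plus (J : Ideal (MvPolynomial (Fin 2) K)) (t : ℕ) :
    hilbQuot J t
      + Module.finrank K
          ↥(homogeneousSubmodule (Fin 2) K t ⊓ Submodule.restrictScalars K J)
      = t + 1 := by
  have h1 := LinearMap.finrank_range_add_finrank_ker
    (((Ideal.Quotient.mkₐ K J).toLinearMap).comp (homogeneousSubmodule (Fin 2) K t).subtype)
  rw [LinearMap.range_comp, Submodule.range_subtype, LinearMap.ker_comp] at h1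
  have hkerφ : LinearMap.ker (Ideal.Quotient.mkₐ K J).toLinearMap
      = Submodule.restrictScalars K J := by
    ext f
    rw [LinearMap.mem_ker, Submodule.restrictScalars_mem]
    simp only [AlgHom.toLinearMap_apply, Ideal.Quotient.mkₐ_eq_mk]
    exact Ideal.Quotient.eq_zero_iff_mem
  rw [hkerφ] at h1
  have h2 : Module.finrank K
      ↥(Submodule.comap (homogeneousSubmodule (Fin 2) K t).subtype
          (Submodule.restrictScalars K J))
      = Module.finrank K
      ↥(Submodule.map (homogeneousSubmodule (Fin 2) K t).subtype
          (Submodule.comap (homogeneousSubmodule (Fin 2) K t).subtype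
            (Submodule.restrictScalars K J))) :=
    LinearEquiv.finrank_eq (Submodule.equivMapOfInjective _ (Submodule.injective_subtype _) _)
  rw [Submodule.map_comap_subtype] at h2
  rw [h2, finrank_homog] at h1
  unfold hilbQuot
  exact h1

end Stmt9Aux

open Stmt9Aux in
/-- Let `J ⊆ K[x0,x1]` be a nonzero homogeneous ideal and `F` a greatest common divisor of all
nonzero homogeneous elements of `J`.  Then `F` is homogeneous, and its degree equals the
eventual (constant) value of the Hilbert function of `K[x0,x1]/J`. -/
theorem stmt9 {K : Type} [Field K] [IsAlgClosed K]
    (J : Ideal (MvPolynomial (Fin 2) K)) (hne : J ≠ ⊥)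
    (hhom : Ideal.IsHomogeneous (homogeneousSubmodule (Fin 2) K) J)
    (F : MvPolynomial (Fin 2) K)
    (hdvd : ∀ f ∈ J, f ≠ 0 → (∃ e, f.IsHomogeneous e) → F ∣ f)
    (hgcd : ∀ g : MvPolynomial (Fin 2) K,
      (∀ f ∈ J, f ≠ 0 → (∃ e, f.IsHomogeneous e) → g ∣ f) → g ∣ F) :
    ∃ d : ℕ, F.IsHomogeneous d ∧ ∃ T : ℕ, ∀ t ≥ T, hilbQuot J t = d := by
  classical
  obtain ⟨f0, hf0J, hf00, e0, hf0e⟩ := exists_homog_mem hne hhom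
  obtain ⟨g0, hg0⟩ := hdvd f0 hf0J hf00 ⟨e0, hf0e⟩
  have hF0 : F ≠ 0 := by
    rintro rfl
    rw [zero_mul] at hg0
    exact hf00 hg0
  obtain ⟨d, hFd⟩ := isHomogeneous_of_mul (f := F) (g := g0)
    (by rw [← hg0]; exact hf0e) (by rw [← hg0]; exact hf00)
  refine ⟨d, hFd, ?_⟩
  set I : Ideal (MvPolynomial (Fin 2) K) := J.colon (Ideal.span {F}) with hI
  have hquot : ∀ f ∈ J, f ≠ 0 → ∀ e, f.IsHomogeneous e →
      ∃ g, f = F * g ∧ g ∈ I ∧ g.IsHomogeneous (e - d) ∧ d ≤ e := by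
    intro f hfJ hf0 e hfe
    obtain ⟨g, hg⟩ := hdvd f hfJ hf0 ⟨e, hfe⟩
    have hfe' : (F * g).IsHomogeneous e := by rwa [← hg]
    have hfg0 : F * g ≠ 0 := by rwa [← hg]
    obtain ⟨b, hb⟩ := isHomogeneous_of_mul (f := g) (g := F)
      (by rwa [mul_comm]) (by rwa [mul_comm])
    have hde : d + b = e := (hFd.mul hb).inj_right hfe' hfg0
    refine ⟨g, hg, ?_, by rwa [show e - d = b by omega], by omega⟩
    rw [hI, Ideal.mem_colon_span_singleton, mul_comm, ← hg]
    exact hfJ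
  have hpow : ∀ i j : Fin 2, i ≠ j → (X j : MvPolynomial (Fin 2) K) ∈ I.radical := by
    intro i j hij
    rw [← MvPolynomial.vanishingIdeal_zeroLocus_eq_radical (K := K)]
    intro x hx
    rw [aeval_X]
    by_contra hxj
    set ℓ : MvPolynomial (Fin 2) K := X i - C (x i / x j) * X j with hℓ
    have hlhom : ℓ.IsHomogeneous 1 :=
      (isHomogeneous_X _ _).sub (isHomogeneous_C_mul_X _ _)
    have hl0 : ℓ ≠ 0 := by
      intro h
      have hcoeff : coeff (Finsupp.single i 1) ℓ = 1 := by
        rw [hℓ, coeff_sub, coeff_C_mul, coeff_X', coeff_X', if_pos rfl,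
          if_neg (by
            intro hEq
            have := (Finsupp.single_left_injective (one_ne_zero)).eq_iff.mp hEq
            exact hij this.symm)]
        ring
      rw [h] at hcoeff
      simp at hcoeff
    have hFl : F * ℓ ∣ F := by
      apply hgcd
      intro f hfJ hf0 hex
      obtain ⟨e, hfe⟩ := hex
      obtain ⟨g, hfg, hgI, hge, _⟩ := hquot f hfJ hf0 e hfe
      have hgx : eval x g = 0 := hx g hgI
      have hlg : ℓ ∣ g := linear_dvd_of_eval_zero hij hxj hge hgx
      rw [hfg]
      exact mul_dvd_mul_left F hlg
    have hl1 : ℓ ∣ 1 := by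
      have h' : F * ℓ ∣ F * 1 := by rwa [mul_one]
      exact (mul_dvd_mul_iff_left hF0).mp h'
    exact not_unit_of_homog_one hlhom hl0 (isUnit_of_dvd_one hl1)
  obtain ⟨N1, hN1⟩ := Ideal.mem_radical_iff.mp (hpow 1 0 (by decide))
  obtain ⟨N2, hN2⟩ := Ideal.mem_radical_iff.mp (hpow 0 1 (by decide))
  set N := max N1 N2 with hN
  have hX0 : (X 0 : MvPolynomial (Fin 2) K) ^ N ∈ I := by
    have hsplit : (X 0 : MvPolynomial (Fin 2) K) ^ N = X 0 ^ N1 * X 0 ^ (N - N1) := by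
      rw [← pow_add]
      congr 1
      omega
    rw [hsplit]
    exact Ideal.mul_mem_right _ _ hN1
  have hX1 : (X 1 : MvPolynomial (Fin 2) K) ^ N ∈ I := by
    have hsplit : (X 1 : MvPolynomial (Fin 2) K) ^ N = X 1 ^ N2 * X 1 ^ (N - N2) := by
      rw [← pow_add]
      congr 1
      omega
    rw [hsplit]
    exact Ideal.mul_mem_right _ _ hN2
  refine ⟨d + 2 * N, fun t ht => ?_⟩
  have hsubI : ∀ g : MvPolynomial (Fin 2) K, g.IsHomogeneous (t - d) → g ∈ I := by
    intro g hg
    exact homog_mem_of_pow_mem hX0 hX1 hg (by omega)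
  have hJt : homogeneousSubmodule (Fin 2) K t ⊓ Submodule.restrictScalars K J
      = Submodule.map (LinearMap.mulLeft K F) (homogeneousSubmodule (Fin 2) K (t - d)) := by
    ext h
    simp only [Submodule.mem_inf, Submodule.restrictScalars_mem, Submodule.mem_map,
      mem_homogeneousSubmodule, LinearMap.mulLeft_apply]
    constructor
    · rintro ⟨hht, hhJ⟩
      by_cases h0 : h = 0
      · exact ⟨0, isHomogeneous_zero _ _ _, by rw [mul_zero, h0]⟩
      · obtain ⟨g, hfg, _, hge, _⟩ := hquot h hhJ h0 t hht
        exact ⟨g, hge, hfg.symm⟩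
    · rintro ⟨g, hg, rfl⟩
      constructor
      · have := hFd.mul hg
        rwa [show d + (t - d) = t by omega] at this
      · have hgI : g ∈ I := hsubI g hg
        rw [hI, Ideal.mem_colon_span_singleton] at hgI
        rwa [mul_comm]
  have hinj : Function.Injective (LinearMap.mulLeft K F) := by
    intro a b hab
    simp only [LinearMap.mulLeft_apply] at hab
    exact mul_left_cancel₀ hF0 hab
  have h3 : Module.finrank K
      ↥(homogeneousSubmodule (Fin 2) K t ⊓ Submodule.restrictScalars K J) = t - d + 1 := by
    rw [hJt, ← (Submodule.equivMapOfInjective _ hinj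
      (homogeneousSubmodule (Fin 2) K (t - d))).finrank_eq, finrank_homog]
  have h4 := hilb_plus J t
  rw [h3] at h4
  omega
end
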